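/- Let g be a metric on an open set Ω ⊆ ℝ^m and let τ be a smooth timelike covector field (Σ_{i,j} g^{ij} τ_i τ_j < 0 everywhere) satisfying ∇_i τ_j = κ g_{ij} + α_i τ_j + τ_i β_j with Σ_{i,j} g^{ij} α_i τ_j = 0 and Σ_{i,j} g^{ij} β_i τ_j = 0. Define N = √(−Σ_{i,j} g^{ij} τ_i τ_j) and u_i = τ_i / N. Then u is unit timelike (Σ_{i,j} g^{ij} u_i u_j = −1), it satisfies ∇_i u_j = (κ/N)(u_i u_j + g_{ij}) + u_i β_j, and its acceleration u̇_j := Σ_{i,k} g^{ik} u_k ∇_i u_j equals −β_j at every point of Ω. -/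

import Mathlib

open scoped BigOperators

/-- Partial derivative of `f : ℝ^m → ℝ` in the `i`-th coordinate direction. -/
noncomputable def pd {m : ℕ} (i : Fin m) (f : (Fin m → ℝ) → ℝ) (x : Fin m → ℝ) : ℝ :=
  fderiv ℝ f x (Pi.single i 1)

/-- Christoffel symbols `Γ^k_{ij}` of a matrix-valued field `g`. -/
noncomputable def Christoffel {m : ℕ} (g : (Fin m → ℝ) → Matrix (Fin m) (Fin m) ℝ)
    (k i j : Fin m) (x : Fin m → ℝ) : ℝ :=
  (1 / 2) * ∑ l, (g x)⁻¹ k l *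
    (pd i (fun y => g y l j) x + pd j (fun y => g y l i) x - pd l (fun y => g y i j) x)

/-- Covariant derivative `∇_i τ_j` of a covector field `τ`. -/
noncomputable def covDeriv {m : ℕ} (g : (Fin m → ℝ) → Matrix (Fin m) (Fin m) ℝ)
    (τ : (Fin m → ℝ) → Fin m → ℝ) (i j : Fin m) (x : Fin m → ℝ) : ℝ :=
  pd i (fun y => τ y j) x - ∑ k, Christoffel g k i j x * τ x k

/-- `g` is a metric on `Ω`: smooth, symmetric and invertible there. -/
def IsMetricOn {m : ℕ} (g : (Fin m → ℝ) → Matrix (Fin m) (Fin m) ℝ)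
    (Ω : Set (Fin m → ℝ)) : Prop :=
  (∀ i j, ContDiffOn ℝ (⊤ : ℕ∞) (fun x => g x i j) Ω) ∧
  (∀ x ∈ Ω, (g x).IsSymm) ∧ (∀ x ∈ Ω, IsUnit (g x).det)

section helpers
variable {m : ℕ} {i : Fin m} {x : Fin m → ℝ} {f h : (Fin m → ℝ) → ℝ}

variable {m : ℕ} {i : Fin m} {x : Fin m → ℝ} {f h : (Fin m → ℝ) → ℝ}

theorem pd_congr_nhds (hfh : f =ᶠ[nhds x] h) : pd i f x = pd i h x := by
  unfold pd; rw [hfh.fderiv_eq]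

theorem pd_const (c : ℝ) : pd i (fun _ => c) x = 0 := by
  simp [pd]

theorem pd_add (hf : DifferentiableAt ℝ f x) (hh : DifferentiableAt ℝ h x) :
    pd i (fun y => f y + h y) x = pd i f x + pd i h x := by
  unfold pd; rw [fderiv_fun_add hf hh]; simp

theorem pd_mul (hf : DifferentiableAt ℝ f x) (hh : DifferentiableAt ℝ h x) :
    pd i (fun y => f y * h y) x = f x * pd i h x + h x * pd i f x := by
  unfold pd; rw [fderiv_fun_mul hf hh]; simp

theorem pd_sum {ι : Type*} (s : Finset ι) (F : ι → (Fin m → ℝ) → ℝ)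
    (hF : ∀ a ∈ s, DifferentiableAt ℝ (F a) x) :
    pd i (fun y => ∑ a ∈ s, F a y) x = ∑ a ∈ s, pd i (F a) x := by
  unfold pd; rw [fderiv_fun_sum hF]; simp

theorem pd_neg : pd i (fun y => -f y) x = -pd i f x := by
  unfold pd; rw [fderiv_fun_neg]; simp

theorem pd_sqrt (hf : DifferentiableAt ℝ f x) (h0 : f x ≠ 0) :
    pd i (fun y => Real.sqrt (f y)) x = pd i f x / (2 * Real.sqrt (f x)) := by
  unfold pd
  rw [(hf.hasFDerivAt.sqrt h0).fderiv]
  simp [div_eq_inv_mul]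

theorem pd_inv (hf : DifferentiableAt ℝ f x) (h0 : f x ≠ 0) :
    pd i (fun y => (f y)⁻¹) x = -pd i f x / f x ^ 2 := by
  unfold pd
  have H := ((hasDerivAt_inv h0).comp_hasFDerivAt x hf.hasFDerivAt).fderiv
  rw [Function.comp_def] at H
  rw [H]
  simp [div_eq_inv_mul]

theorem differentiableAt_det {M : (Fin m → ℝ) → Matrix (Fin m) (Fin m) ℝ}
    (hM : ∀ a b, DifferentiableAt ℝ (fun y => M y a b) x) :
    DifferentiableAt ℝ (fun y => (M y).det) x := by
  simp only [Matrix.det_apply, Units.smul_def, zsmul_eq_mul]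
  exact DifferentiableAt.fun_sum fun σ _ =>
    (differentiableAt_const _).mul
      (HasFDerivAt.finset_prod (fun a _ => (hM (σ a) a).hasFDerivAt)).differentiableAt

end helpers

theorem differentiableAt_det' {m : ℕ} {x : Fin m → ℝ}
    {M : (Fin m → ℝ) → Matrix (Fin m) (Fin m) ℝ}
    (hM : ∀ a b, DifferentiableAt ℝ (fun y => M y a b) x) :
    DifferentiableAt ℝ (fun y => (M y).det) x := by
  simp only [Matrix.det_apply, Units.smul_def, zsmul_eq_mul]
  exact DifferentiableAt.fun_sum fun σ _ =>
    (differentiableAt_const _).mul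
      (HasFDerivAt.finset_prod (fun a _ => (hM (σ a) a).hasFDerivAt)).differentiableAt

theorem differentiableAt_inv_entry {m : ℕ} {x : Fin m → ℝ}
    {M : (Fin m → ℝ) → Matrix (Fin m) (Fin m) ℝ}
    (hM : ∀ a b, DifferentiableAt ℝ (fun y => M y a b) x)
    (hdet : (M x).det ≠ 0) (a b : Fin m) :
    DifferentiableAt ℝ (fun y => (M y)⁻¹ a b) x := by
  have h1 : (fun y => (M y)⁻¹ a b) = fun y => ((M y).det)⁻¹ * (M y).adjugate a b := by
    funext y
    rw [Matrix.inv_def, Matrix.smul_apply, Ring.inverse_eq_inv, smul_eq_mul]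
  rw [h1]
  refine DifferentiableAt.mul ((differentiableAt_det' hM).inv hdet) ?_
  have h2 : (fun y => (M y).adjugate a b) = fun y => ((M y).updateRow b (Pi.single a 1)).det := by
    funext y
    rw [Matrix.adjugate_apply]
  rw [h2]
  apply differentiableAt_det'
  intro c d
  by_cases hcb : c = b
  · simp only [Matrix.updateRow_apply, hcb, if_pos]
    exact differentiableAt_const _
  · simp only [Matrix.updateRow_apply, hcb, if_false]
    exact hM c d

theorem sum4_swap {m : ℕ} (M : Fin m → Fin m → Fin m → Fin m → ℝ) :
    ∑ a, ∑ b, ∑ c, ∑ d, M a b c d = ∑ c, ∑ d, ∑ a, ∑ b, M a b c d := by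
  calc ∑ a, ∑ b, ∑ c, ∑ d, M a b c d
      = ∑ a, ∑ c, ∑ b, ∑ d, M a b c d :=
        Finset.sum_congr rfl fun a _ => Finset.sum_comm
    _ = ∑ c, ∑ a, ∑ b, ∑ d, M a b c d := Finset.sum_comm
    _ = ∑ c, ∑ a, ∑ d, ∑ b, M a b c d :=
        Finset.sum_congr rfl fun c _ =>
          Finset.sum_congr rfl fun a _ => Finset.sum_comm
    _ = ∑ c, ∑ d, ∑ a, ∑ b, M a b c d :=
        Finset.sum_congr rfl fun c _ => Finset.sum_comm

theorem core_alg {m : ℕ} (G H : Matrix (Fin m) (Fin m) ℝ) (t al be : Fin m → ℝ) (κx : ℝ)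
    (Dg : Fin m → Fin m → Fin m → ℝ) (Dτ : Fin m → Fin m → ℝ)
    (Din : Fin m → Fin m → Fin m → ℝ) (i : Fin m)
    (hHsym : ∀ a b, H a b = H b a)
    (hGH : ∀ a b, (∑ c, G a c * H c b) = if a = b then (1:ℝ) else 0)
    (hDgsym : ∀ l a b, Dg l a b = Dg l b a)
    (hDin : ∀ a b, Din i a b = -∑ c, ∑ d, H a c * Dg i c d * H d b)
    (hDτ : ∀ j, Dτ i j = κx * G i j + al i * t j + t i * be j
        + ∑ k, ((1/2) * ∑ l, H k l * (Dg i l j + Dg j l i - Dg l i j)) * t k)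
    (hbt : (∑ a, ∑ b, H a b * be a * t b) = 0) :
    (∑ a, ∑ b, ((H a b * t a) * Dτ i b + t b * (H a b * Dτ i a + t a * Din i a b)))
      = 2 * κx * t i + 2 * al i * (∑ a, ∑ b, H a b * t a * t b) := by
  have hPH : ∀ b, (∑ a, H a b * t a) = ∑ c, H b c * t c := by
    intro b
    exact Finset.sum_congr rfl fun a _ => by rw [hHsym]
  have hGP : ∀ j, (∑ a, G j a * ∑ c, H a c * t c) = t j := by
    intro j
    calc ∑ a, G j a * ∑ c, H a c * t c = ∑ a, ∑ c, G j a * (H a c * t c) := by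
          exact Finset.sum_congr rfl fun a _ => by rw [Finset.mul_sum]
      _ = ∑ c, ∑ a, G j a * (H a c * t c) := Finset.sum_comm
      _ = ∑ c, (∑ a, G j a * H a c) * t c := by
          refine Finset.sum_congr rfl fun c _ => ?_
          rw [Finset.sum_mul]
          exact Finset.sum_congr rfl fun a _ => by ring
      _ = ∑ c, (if j = c then (1:ℝ) else 0) * t c := by
          exact Finset.sum_congr rfl fun c _ => by rw [hGH]
      _ = t j := by simp
  have hPt : (∑ a, (∑ c, H a c * t c) * t a) = ∑ a, ∑ b, H a b * t a * t b := by
    refine Finset.sum_congr rfl fun a _ => ?_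
    rw [Finset.sum_mul]
    exact Finset.sum_congr rfl fun c _ => by ring
  have hPb : (∑ a, (∑ c, H a c * t c) * be a) = 0 := by
    rw [← hbt]
    refine Finset.sum_congr rfl fun a _ => ?_
    rw [Finset.sum_mul]
    exact Finset.sum_congr rfl fun c _ => by ring
  have hPDτ : (∑ a, (∑ c, H a c * t c) * Dτ i a)
      = κx * t i + al i * (∑ a, ∑ b, H a b * t a * t b)
        + (1/2) * ∑ c, ∑ d, (∑ e, H c e * t e) * Dg i c d * (∑ e, H d e * t e) := by
    have expand : ∀ a, (∑ c, H a c * t c) * Dτ i a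
        = κx * (G i a * ∑ c, H a c * t c) + al i * ((∑ c, H a c * t c) * t a)
          + t i * ((∑ c, H a c * t c) * be a)
          + (∑ c, H a c * t c) *
              ∑ k, ((1/2) * ∑ l, H k l * (Dg i l a + Dg a l i - Dg l i a)) * t k := by
      intro a
      rw [hDτ]; ring
    rw [Finset.sum_congr rfl fun a _ => expand a]
    rw [Finset.sum_add_distrib, Finset.sum_add_distrib, Finset.sum_add_distrib]
    rw [← Finset.mul_sum, ← Finset.mul_sum, ← Finset.mul_sum, hGP, hPt, hPb, mul_zero]
    have hT4 : (∑ a, (∑ c, H a c * t c) *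
          ∑ k, ((1/2) * ∑ l, H k l * (Dg i l a + Dg a l i - Dg l i a)) * t k)
        = (1/2) * ∑ c, ∑ d, (∑ e, H c e * t e) * Dg i c d * (∑ e, H d e * t e) := by
      calc ∑ a, (∑ c, H a c * t c) *
              ∑ k, ((1/2) * ∑ l, H k l * (Dg i l a + Dg a l i - Dg l i a)) * t k
          = ∑ a, ∑ k, ∑ l, (1/2) * ((∑ c, H a c * t c) *
              ((t k * H k l) * (Dg i l a + Dg a l i - Dg l i a))) := by
            refine Finset.sum_congr rfl fun a _ => ?_
            rw [Finset.mul_sum]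
            refine Finset.sum_congr rfl fun k _ => ?_
            rw [show ((1/2 : ℝ) * ∑ l, H k l * (Dg i l a + Dg a l i - Dg l i a)) * t k
                = ∑ l, (1/2) * (H k l * (Dg i l a + Dg a l i - Dg l i a) * t k) by
              rw [mul_assoc, Finset.sum_mul, Finset.mul_sum]]
            rw [Finset.mul_sum]
            exact Finset.sum_congr rfl fun l _ => by ring
        _ = ∑ a, ∑ l, ∑ k, (1/2) * ((∑ c, H a c * t c) *
              ((t k * H k l) * (Dg i l a + Dg a l i - Dg l i a))) :=
            Finset.sum_congr rfl fun a _ => Finset.sum_comm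
        _ = ∑ a, ∑ l, (1/2) * ((∑ c, H a c * t c) *
              ((∑ c, H l c * t c) * (Dg i l a + Dg a l i - Dg l i a))) := by
            refine Finset.sum_congr rfl fun a _ => Finset.sum_congr rfl fun l _ => ?_
            calc ∑ k, (1/2 : ℝ) * ((∑ c, H a c * t c) *
                  ((t k * H k l) * (Dg i l a + Dg a l i - Dg l i a)))
                = ∑ k, (H k l * t k) * ((1/2) * ((∑ c, H a c * t c) *
                    (Dg i l a + Dg a l i - Dg l i a))) :=
                  Finset.sum_congr rfl fun k _ => by ring
              _ = (∑ k, H k l * t k) * ((1/2) * ((∑ c, H a c * t c) *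
                    (Dg i l a + Dg a l i - Dg l i a))) := (Finset.sum_mul _ _ _).symm
              _ = (1/2) * ((∑ c, H a c * t c) *
                    ((∑ c, H l c * t c) * (Dg i l a + Dg a l i - Dg l i a))) := by
                  rw [hPH]; ring
        _ = ∑ a, ∑ l, ((1/2) * ((∑ c, H a c * t c) * ((∑ c, H l c * t c) * Dg i l a))
              + ((1/2) * ((∑ c, H a c * t c) * ((∑ c, H l c * t c) * Dg a l i))
                - (1/2) * ((∑ c, H a c * t c) * ((∑ c, H l c * t c) * Dg l i a)))) :=
            Finset.sum_congr rfl fun a _ => Finset.sum_congr rfl fun l _ => by ring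
        _ = (∑ a, ∑ l, (1/2) * ((∑ c, H a c * t c) * ((∑ c, H l c * t c) * Dg i l a)))
              + ((∑ a, ∑ l, (1/2) * ((∑ c, H a c * t c) * ((∑ c, H l c * t c) * Dg a l i)))
                - (∑ a, ∑ l, (1/2) * ((∑ c, H a c * t c) * ((∑ c, H l c * t c) * Dg l i a)))) := by
            simp only [Finset.sum_add_distrib, Finset.sum_sub_distrib]
        _ = (1/2) * ∑ c, ∑ d, (∑ e, H c e * t e) * Dg i c d * (∑ e, H d e * t e) := by
            have hcancel : (∑ a, ∑ l, (1/2 : ℝ) * ((∑ c, H a c * t c) *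
                  ((∑ c, H l c * t c) * Dg a l i)))
                = ∑ a, ∑ l, (1/2) * ((∑ c, H a c * t c) * ((∑ c, H l c * t c) * Dg l i a)) := by
              rw [Finset.sum_comm]
              refine Finset.sum_congr rfl fun a _ => Finset.sum_congr rfl fun l _ => ?_
              rw [hDgsym l a i]
              ring
            rw [hcancel, sub_self, add_zero]
            rw [Finset.mul_sum, Finset.sum_comm]
            refine Finset.sum_congr rfl fun c _ => ?_
            rw [Finset.mul_sum]
            exact Finset.sum_congr rfl fun d _ => by ring
    rw [hT4]; ring
  have hS3 : (∑ a, ∑ b, t b * (t a * Din i a b))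
      = -∑ c, ∑ d, (∑ e, H c e * t e) * Dg i c d * (∑ e, H d e * t e) := by
    have key : ∀ a b, t b * (t a * Din i a b)
        = -∑ c, ∑ d, H a c * Dg i c d * H d b * (t a * t b) := by
      intro a b
      rw [show t b * (t a * Din i a b) = Din i a b * (t a * t b) by ring, hDin, neg_mul,
        Finset.sum_mul]
      congr 1
      exact Finset.sum_congr rfl fun c _ => by rw [Finset.sum_mul]
    calc ∑ a, ∑ b, t b * (t a * Din i a b)
        = ∑ a, ∑ b, -(∑ c, ∑ d, H a c * Dg i c d * H d b * (t a * t b)) :=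
          Finset.sum_congr rfl fun a _ => Finset.sum_congr rfl fun b _ => key a b
      _ = -∑ a, ∑ b, ∑ c, ∑ d, H a c * Dg i c d * H d b * (t a * t b) := by
          simp only [Finset.sum_neg_distrib]
      _ = -∑ c, ∑ d, ∑ a, ∑ b, H a c * Dg i c d * H d b * (t a * t b) := by
          rw [sum4_swap]
      _ = -∑ c, ∑ d, (∑ e, H c e * t e) * Dg i c d * (∑ e, H d e * t e) := by
          congr 1
          refine Finset.sum_congr rfl fun c _ => Finset.sum_congr rfl fun d _ => ?_
          calc ∑ a, ∑ b, H a c * Dg i c d * H d b * (t a * t b)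
              = ∑ a, (H a c * t a) * Dg i c d * (∑ b, H d b * t b) := by
                refine Finset.sum_congr rfl fun a _ => ?_
                calc ∑ b, H a c * Dg i c d * H d b * (t a * t b)
                    = ∑ b, (H a c * t a * Dg i c d) * (H d b * t b) :=
                      Finset.sum_congr rfl fun b _ => by ring
                  _ = H a c * t a * Dg i c d * ∑ b, H d b * t b := by
                      rw [← Finset.mul_sum]
            _ = (∑ a, H a c * t a) * Dg i c d * (∑ b, H d b * t b) := by
                rw [Finset.sum_mul, Finset.sum_mul]
            _ = (∑ e, H c e * t e) * Dg i c d * (∑ e, H d e * t e) := by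
                rw [hPH]
  have hS1 : (∑ a, ∑ b, (H a b * t a) * Dτ i b) = ∑ b, (∑ c, H b c * t c) * Dτ i b := by
    rw [Finset.sum_comm]
    refine Finset.sum_congr rfl fun b _ => ?_
    rw [← Finset.sum_mul, hPH]
  have hS2 : (∑ a, ∑ b, t b * (H a b * Dτ i a)) = ∑ a, (∑ c, H a c * t c) * Dτ i a := by
    refine Finset.sum_congr rfl fun a _ => ?_
    rw [Finset.sum_mul]
    exact Finset.sum_congr rfl fun b _ => by ring
  calc (∑ a, ∑ b, ((H a b * t a) * Dτ i b + t b * (H a b * Dτ i a + t a * Din i a b)))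
      = ∑ a, ∑ b, ((H a b * t a) * Dτ i b
          + (t b * (H a b * Dτ i a) + t b * (t a * Din i a b))) :=
        Finset.sum_congr rfl fun a _ => Finset.sum_congr rfl fun b _ => by ring
    _ = (∑ a, ∑ b, (H a b * t a) * Dτ i b)
          + ((∑ a, ∑ b, t b * (H a b * Dτ i a)) + ∑ a, ∑ b, t b * (t a * Din i a b)) := by
        simp only [Finset.sum_add_distrib]
    _ = 2 * κx * t i + 2 * al i * (∑ a, ∑ b, H a b * t a * t b) := by
        rw [hS1, hS2, hS3, hPDτ]
        ring

theorem inv_deriv_alg {m : ℕ} (G H : Matrix (Fin m) (Fin m) ℝ)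
    (Dg DH : Fin m → Fin m → ℝ)
    (hGH : ∀ a b, (∑ c, G a c * H c b) = if a = b then (1:ℝ) else 0)
    (hrel : ∀ j b, (∑ a, (H j a * Dg a b + G a b * DH j a)) = 0) :
    ∀ j k, DH j k = -∑ c, ∑ d, H j c * Dg c d * H d k := by
  intro j k
  have hrel' : ∀ b, (∑ a, G a b * DH j a) = -∑ a, H j a * Dg a b := by
    intro b
    have := hrel j b
    rw [Finset.sum_add_distrib] at this
    linarith
  calc DH j k = ∑ a, DH j a * (if a = k then (1:ℝ) else 0) := by simp
    _ = ∑ a, DH j a * ∑ b, G a b * H b k :=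
        Finset.sum_congr rfl fun a _ => by rw [hGH]
    _ = ∑ a, ∑ b, DH j a * (G a b * H b k) :=
        Finset.sum_congr rfl fun a _ => by rw [Finset.mul_sum]
    _ = ∑ b, ∑ a, DH j a * (G a b * H b k) := Finset.sum_comm
    _ = ∑ b, (∑ a, G a b * DH j a) * H b k := by
        refine Finset.sum_congr rfl fun b _ => ?_
        rw [Finset.sum_mul]
        exact Finset.sum_congr rfl fun a _ => by ring
    _ = ∑ b, (-∑ a, H j a * Dg a b) * H b k :=
        Finset.sum_congr rfl fun b _ => by rw [hrel']
    _ = -∑ b, ∑ a, H j a * Dg a b * H b k := by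
        rw [← Finset.sum_neg_distrib]
        refine Finset.sum_congr rfl fun b _ => ?_
        rw [neg_mul, Finset.sum_mul]
    _ = -∑ c, ∑ d, H j c * Dg c d * H d k := by rw [Finset.sum_comm]

theorem accel_alg {m : ℕ} (G H : Matrix (Fin m) (Fin m) ℝ) (uv be : Fin m → ℝ) (c : ℝ)
    (j : Fin m)
    (hHsym : ∀ a b, H a b = H b a)
    (hHG : ∀ a b, (∑ e, H a e * G e b) = if a = b then (1:ℝ) else 0)
    (hunit : (∑ a, ∑ b, H a b * uv a * uv b) = -1) :
    (∑ a, ∑ k, H a k * uv k * (c * (uv a * uv j + G a j) + uv a * be j)) = -(be j) := by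
  have hS1 : (∑ a, ∑ k, H a k * uv k * uv a) = -1 := by
    rw [← hunit]
    exact Finset.sum_congr rfl fun a _ => Finset.sum_congr rfl fun k _ => by ring
  have hS2 : (∑ a, ∑ k, H a k * uv k * G a j) = uv j := by
    calc ∑ a, ∑ k, H a k * uv k * G a j = ∑ k, ∑ a, H a k * uv k * G a j := Finset.sum_comm
      _ = ∑ k, (∑ a, H k a * G a j) * uv k := by
          refine Finset.sum_congr rfl fun k _ => ?_
          rw [Finset.sum_mul]
          exact Finset.sum_congr rfl fun a _ => by rw [hHsym a k]; ring
      _ = ∑ k, (if k = j then (1:ℝ) else 0) * uv k :=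
          Finset.sum_congr rfl fun k _ => by rw [hHG]
      _ = uv j := by simp
  calc (∑ a, ∑ k, H a k * uv k * (c * (uv a * uv j + G a j) + uv a * be j))
      = ∑ a, ∑ k, ((c * uv j) * (H a k * uv k * uv a) + (c * (H a k * uv k * G a j)
          + be j * (H a k * uv k * uv a))) :=
        Finset.sum_congr rfl fun a _ => Finset.sum_congr rfl fun k _ => by ring
    _ = (c * uv j) * (∑ a, ∑ k, H a k * uv k * uv a)
          + (c * (∑ a, ∑ k, H a k * uv k * G a j)
            + be j * (∑ a, ∑ k, H a k * uv k * uv a)) := by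
        simp only [Finset.sum_add_distrib, Finset.mul_sum]
    _ = -(be j) := by rw [hS1, hS2]; ring

/-- `u_i = τ_i / N` is unit timelike, satisfies
`∇_i u_j = (κ/N)(u_i u_j + g_ij) + u_i β_j`, and its acceleration equals `-β`. -/
theorem doubly_torqued_unit_vector
    {m : ℕ} (Ω : Set (Fin m → ℝ)) (hΩ : IsOpen Ω)
    (g : (Fin m → ℝ) → Matrix (Fin m) (Fin m) ℝ) (hg : IsMetricOn g Ω)
    (τ : (Fin m → ℝ) → Fin m → ℝ) (hτ : ∀ j, ContDiffOn ℝ (⊤ : ℕ∞) (fun x => τ x j) Ω)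
    (κ : (Fin m → ℝ) → ℝ) (hκ : ContDiffOn ℝ (⊤ : ℕ∞) κ Ω)
    (α β : (Fin m → ℝ) → Fin m → ℝ)
    (hα : ∀ j, ContDiffOn ℝ (⊤ : ℕ∞) (fun x => α x j) Ω)
    (hβ : ∀ j, ContDiffOn ℝ (⊤ : ℕ∞) (fun x => β x j) Ω)
    (heq : ∀ x ∈ Ω, ∀ i j : Fin m,
      covDeriv g τ i j x = κ x * g x i j + α x i * τ x j + τ x i * β x j)
    (hατ : ∀ x ∈ Ω, ∑ i, ∑ j, (g x)⁻¹ i j * α x i * τ x j = 0)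
    (hβτ : ∀ x ∈ Ω, ∑ i, ∑ j, (g x)⁻¹ i j * β x i * τ x j = 0)
    (hτtime : ∀ x ∈ Ω, ∑ i, ∑ j, (g x)⁻¹ i j * τ x i * τ x j < 0)
    (N : (Fin m → ℝ) → ℝ)
    (hN : ∀ x, N x = Real.sqrt (-(∑ i, ∑ j, (g x)⁻¹ i j * τ x i * τ x j)))
    (u : (Fin m → ℝ) → Fin m → ℝ) (hu : ∀ x i, u x i = τ x i / N x) :
    ∀ x ∈ Ω,
      (∑ i, ∑ j, (g x)⁻¹ i j * u x i * u x j = -1) ∧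
      (∀ i j : Fin m,
        covDeriv g u i j x = (κ x / N x) * (u x i * u x j + g x i j) + u x i * β x j) ∧
      (∀ j : Fin m,
        ∑ i, ∑ k, (g x)⁻¹ i k * u x k * covDeriv g u i j x = -(β x j)) := by
  obtain ⟨hgsm, hgsymm, hgdet⟩ := hg
  intro x hx
  have hΩx : Ω ∈ nhds x := hΩ.mem_nhds hx
  have hGd : ∀ a b, DifferentiableAt ℝ (fun y => g y a b) x := fun a b =>
    ((hgsm a b).contDiffAt hΩx).differentiableAt (by simp)
  have hτd : ∀ a, DifferentiableAt ℝ (fun y => τ y a) x := fun a =>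
    ((hτ a).contDiffAt hΩx).differentiableAt (by simp)
  have hdetne : ∀ y ∈ Ω, (g y).det ≠ 0 := fun y hy => (hgdet y hy).ne_zero
  have hHd : ∀ a b, DifferentiableAt ℝ (fun y => (g y)⁻¹ a b) x :=
    differentiableAt_inv_entry hGd (hdetne x hx)
  have hGHx : ∀ a b, (∑ c, g x a c * (g x)⁻¹ c b) = if a = b then (1:ℝ) else 0 := by
    intro a b
    have h := congrFun (congrFun (Matrix.mul_nonsing_inv (g x) (hgdet x hx)) a) b
    rw [Matrix.mul_apply] at h
    rw [h, Matrix.one_apply]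
  have hHGx : ∀ a b, (∑ c, (g x)⁻¹ a c * g x c b) = if a = b then (1:ℝ) else 0 := by
    intro a b
    have h := congrFun (congrFun (Matrix.nonsing_inv_mul (g x) (hgdet x hx)) a) b
    rw [Matrix.mul_apply] at h
    rw [h, Matrix.one_apply]
  have hHsymx : ∀ a b, (g x)⁻¹ a b = (g x)⁻¹ b a := by
    intro a b
    have h : ((g x)⁻¹).transpose = (g x)⁻¹ := by
      rw [Matrix.transpose_nonsing_inv, (hgsymm x hx).eq]
    calc (g x)⁻¹ a b = ((g x)⁻¹).transpose b a := rfl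
      _ = (g x)⁻¹ b a := by rw [h]
  have hDgsym : ∀ l a b, pd l (fun y => g y a b) x = pd l (fun y => g y b a) x := by
    intro l a b
    apply pd_congr_nhds
    filter_upwards [hΩx] with y hy
    exact (hgsymm y hy).apply b a
  -- timelike data
  have hQneg : (∑ a, ∑ b, (g x)⁻¹ a b * τ x a * τ x b) < 0 := hτtime x hx
  have hQne : (∑ a, ∑ b, (g x)⁻¹ a b * τ x a * τ x b) ≠ 0 := ne_of_lt hQneg
  have hQd : DifferentiableAt ℝ (fun y => ∑ a, ∑ b, (g y)⁻¹ a b * τ y a * τ y b) x :=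
    DifferentiableAt.fun_sum fun a _ => DifferentiableAt.fun_sum fun b _ =>
      ((hHd a b).mul (hτd a)).mul (hτd b)
  have hNx : N x = Real.sqrt (-(∑ a, ∑ b, (g x)⁻¹ a b * τ x a * τ x b)) := hN x
  have hNpos : 0 < N x := by
    rw [hNx]; exact Real.sqrt_pos.mpr (by linarith)
  have hNne : N x ≠ 0 := ne_of_gt hNpos
  have hNsq : N x ^ 2 = -(∑ a, ∑ b, (g x)⁻¹ a b * τ x a * τ x b) := by
    rw [hNx]; exact Real.sq_sqrt (by linarith)
  have hQN : (∑ a, ∑ b, (g x)⁻¹ a b * τ x a * τ x b) = -(N x ^ 2) := by linarith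
  have hNfun : N = fun y => Real.sqrt (-(∑ a, ∑ b, (g y)⁻¹ a b * τ y a * τ y b)) := funext hN
  have hNd : DifferentiableAt ℝ N x := by
    rw [hNfun]
    exact hQd.neg.sqrt (by simpa using hQne)
  have hufun : ∀ a, (fun y => u y a) = fun y => τ y a * (N y)⁻¹ := fun a =>
    funext fun y => by rw [hu, div_eq_mul_inv]
  -- part 1
  have part1 : (∑ a, ∑ b, (g x)⁻¹ a b * u x a * u x b) = -1 := by
    calc ∑ a, ∑ b, (g x)⁻¹ a b * u x a * u x b
        = ∑ a, ∑ b, ((g x)⁻¹ a b * τ x a * τ x b) * (N x ^ 2)⁻¹ := by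
          refine Finset.sum_congr rfl fun a _ => Finset.sum_congr rfl fun b _ => ?_
          rw [hu x a, hu x b]
          rw [div_eq_mul_inv, div_eq_mul_inv]
          ring
      _ = ∑ a, (∑ b, (g x)⁻¹ a b * τ x a * τ x b) * (N x ^ 2)⁻¹ :=
          Finset.sum_congr rfl fun a _ => (Finset.sum_mul _ _ _).symm
      _ = (∑ a, ∑ b, (g x)⁻¹ a b * τ x a * τ x b) * (N x ^ 2)⁻¹ :=
          (Finset.sum_mul _ _ _).symm
      _ = -1 := by
          rw [hNsq, inv_neg, mul_neg, mul_inv_cancel₀ hQne]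
  -- derivative of N
  have hpdN : ∀ i, pd i N x
      = -(pd i (fun y => ∑ a, ∑ b, (g y)⁻¹ a b * τ y a * τ y b) x) / (2 * N x) := by
    intro i
    have e1 : pd i N x
        = pd i (fun y => Real.sqrt (-(∑ a, ∑ b, (g y)⁻¹ a b * τ y a * τ y b))) x := by
      rw [hNfun]
    rw [e1, pd_sqrt hQd.fun_neg (by simpa using hQne), pd_neg, ← hNx]
  -- part 2
  have part2 : ∀ i j, covDeriv g u i j x
      = (κ x / N x) * (u x i * u x j + g x i j) + u x i * β x j := by
    intro i j
    -- inverse matrix derivative relation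
    have hrel : ∀ p b, (∑ a, ((g x)⁻¹ p a * pd i (fun y => g y a b) x
        + g x a b * pd i (fun y => (g y)⁻¹ p a) x)) = 0 := by
      intro p b
      have hev : (fun y => ∑ a, (g y)⁻¹ p a * g y a b)
          =ᶠ[nhds x] fun _ => if p = b then (1:ℝ) else 0 := by
        filter_upwards [hΩx] with y hy
        rw [← Matrix.mul_apply, Matrix.nonsing_inv_mul _ (hgdet y hy), Matrix.one_apply]
      have hpd0 : pd i (fun y => ∑ a, (g y)⁻¹ p a * g y a b) x = 0 := by
        rw [pd_congr_nhds hev, pd_const]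
      rw [pd_sum _ _ (fun a _ => (hHd p a).fun_mul (hGd a b))] at hpd0
      rw [Finset.sum_congr rfl fun a _ => pd_mul (hHd p a) (hGd a b)] at hpd0
      exact hpd0
    have hDin : ∀ a b, pd i (fun y => (g y)⁻¹ a b) x
        = -∑ c, ∑ d, (g x)⁻¹ a c * pd i (fun y => g y c d) x * (g x)⁻¹ d b :=
      inv_deriv_alg (g x) (g x)⁻¹ (fun a b => pd i (fun y => g y a b) x)
        (fun a b => pd i (fun y => (g y)⁻¹ a b) x) hGHx hrel
    have hDτ' : ∀ p, pd i (fun y => τ y p) x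
        = κ x * g x i p + α x i * τ x p + τ x i * β x p
          + ∑ k, ((1/2) * ∑ l, (g x)⁻¹ k l * (pd i (fun y => g y l p) x
              + pd p (fun y => g y l i) x - pd l (fun y => g y i p) x)) * τ x k := by
      intro p
      have h := heq x hx i p
      simp only [covDeriv, Christoffel] at h ⊢
      linarith
    have hpdQ : pd i (fun y => ∑ a, ∑ b, (g y)⁻¹ a b * τ y a * τ y b) x
        = 2 * κ x * τ x i + 2 * α x i * (∑ a, ∑ b, (g x)⁻¹ a b * τ x a * τ x b) := by
      have h1 : pd i (fun y => ∑ a, ∑ b, (g y)⁻¹ a b * τ y a * τ y b) x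
          = ∑ a, ∑ b, (((g x)⁻¹ a b * τ x a) * pd i (fun y => τ y b) x
              + τ x b * ((g x)⁻¹ a b * pd i (fun y => τ y a) x
                + τ x a * pd i (fun y => (g y)⁻¹ a b) x)) := by
        rw [pd_sum _ _ (fun a _ => DifferentiableAt.fun_sum fun b _ =>
          ((hHd a b).fun_mul (hτd a)).fun_mul (hτd b))]
        refine Finset.sum_congr rfl fun a _ => ?_
        rw [pd_sum _ _ (fun b _ => ((hHd a b).fun_mul (hτd a)).fun_mul (hτd b))]
        refine Finset.sum_congr rfl fun b _ => ?_
        rw [pd_mul ((hHd a b).fun_mul (hτd a)) (hτd b), pd_mul (hHd a b) (hτd a)]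
      rw [h1]
      exact core_alg (g x) (g x)⁻¹ (τ x) (α x) (β x) (κ x)
        (fun l a b => pd l (fun y => g y a b) x) (fun l a => pd l (fun y => τ y a) x)
        (fun l a b => pd l (fun y => (g y)⁻¹ a b) x) i hHsymx hGHx hDgsym hDin hDτ'
        (hβτ x hx)
    have hΓτ : (∑ k, Christoffel g k i j x * τ x k)
        = pd i (fun y => τ y j) x - (κ x * g x i j + α x i * τ x j + τ x i * β x j) := by
      have h := heq x hx i j
      simp only [covDeriv] at h
      linarith
    have hsumu : (∑ k, Christoffel g k i j x * u x k)
        = (∑ k, Christoffel g k i j x * τ x k) / N x := by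
      rw [Finset.sum_div]
      refine Finset.sum_congr rfl fun k _ => ?_
      rw [hu x k, mul_div_assoc]
    simp only [covDeriv]
    rw [hsumu, hufun j, pd_mul (hτd j) (hNd.fun_inv hNne), pd_inv hNd hNne, hpdN i, hpdQ,
      hΓτ, hu x i, hu x j, hQN]
    field_simp
    ring
  -- part 3
  refine ⟨part1, part2, fun j => ?_⟩
  calc ∑ a, ∑ k, (g x)⁻¹ a k * u x k * covDeriv g u a j x
      = ∑ a, ∑ k, (g x)⁻¹ a k * u x k
          * ((κ x / N x) * (u x a * u x j + g x a j) + u x a * β x j) :=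
        Finset.sum_congr rfl fun a _ => Finset.sum_congr rfl fun k _ => by rw [part2 a j]
    _ = -(β x j) := accel_alg (g x) (g x)⁻¹ (u x) (β x) (κ x / N x) j hHsymx hHGx part1
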